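/- arXiv:1803.08714 — 5 statements merged into one kernel-verified Lean document; each statement's English description precedes it below -/
import Mathlib

section
/- Let V = ℝ², M = ℝ × {0}, Q(x,y) = -∞ if y ≤ 0 and Q(x,y) = 0 if y > 0, and ℓ(x,0) = x. Then ℓ ≥ Q on M, but there exists no linear map L : ℝ² → ℝ such that L = ℓ on M and L(v) ≥ Q(v) for all v ∈ ℝ². -/
noncomputable def Q : ℝ × ℝ → EReal := fun v => if 0 < v.2 then (0 : EReal) else ⊥

lemma Q_of_pos {v : ℝ × ℝ} (hv : 0 < v.2) : Q v = 0 := if_pos hv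

lemma Q_of_nonpos {v : ℝ × ℝ} (hv : v.2 ≤ 0) : Q v = ⊥ := if_neg hv.not_gt

-- On the line `y = 1` we have `L (x, 1) = x + L (0, 1)`, which is negative for `x` small enough.
lemma LinearMap.apply_neg_sub_one_one_eq_neg_one {L : ℝ × ℝ →ₗ[ℝ] ℝ}
    (hL : ∀ x : ℝ, L (x, 0) = x) : L (-L (0, 1) - 1, 1) = -1 := by
  have hsplit : ((-L (0, 1) - 1, 1) : ℝ × ℝ) = (-L (0, 1) - 1, 0) + (0, 1) := by simp
  rw [hsplit, map_add, hL]
  ring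

/-- `ℓ(x,0) = x` dominates `Q` on `M = ℝ × {0}`, but there is no linear
`L : ℝ² → ℝ` extending `ℓ` with `L ≥ Q` everywhere. -/
theorem stmt_1 :
    (∀ x : ℝ, Q (x, 0) ≤ ((x : ℝ) : EReal)) ∧
    ¬ ∃ L : ℝ × ℝ →ₗ[ℝ] ℝ, (∀ x : ℝ, L (x, 0) = x) ∧
      ∀ v : ℝ × ℝ, Q v ≤ ((L v : ℝ) : EReal) := by
  refine ⟨fun x => (Q_of_nonpos le_rfl).trans_le bot_le, ?_⟩
  rintro ⟨L, hL, hQ⟩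
  have hnonneg := hQ (-L (0, 1) - 1, 1)
  rw [Q_of_pos one_pos, L.apply_neg_sub_one_one_eq_neg_one hL] at hnonneg
  exact absurd (EReal.coe_nonneg.mp hnonneg) (by norm_num)
end

section
/- For any ζ ∈ ℂ, η ∈ ℂ, and r > 0, the quantity F_r(η) = (1/(π r²)) ∫_{D(ζ,r)} |z - ζ|/|z - η| dL(z) satisfies F_r(η) ≤ 2, where dL is Lebesgue measure on ℂ and D(ζ,r) is the open disk of center ζ and radius r. -/
/-!
Since `|z - ζ| < r` on the disk, it suffices to show `∫_{D(ζ,r)} dL(z) / |z - η| ≤ 2πr`. By the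
layer-cake formula this integral is `∫_0^∞ L{z ∈ D(ζ,r) : |z - η| < 1/t} dt`, and the measure of
that set is at most `min (πr², π/t²)`: the first bound for `t ≤ 1/r` and the second one for
`t > 1/r` each contribute `πr`. In other words, among sets of area `πr²` the disk centred at `η`
maximises the integral of `1/|z - η|`.
-/

open MeasureTheory Metric Set

lemma Complex.volume_ball_eq_ofReal (c : ℂ) {s : ℝ} (hs : 0 ≤ s) :
    volume (ball c s) = ENNReal.ofReal (Real.pi * s ^ 2) := by
  rw [Complex.volume_ball, ← ENNReal.ofReal_pow hs, ← NNReal.coe_real_pi,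
    ENNReal.ofReal_coe_nnreal.symm, ← ENNReal.ofReal_mul (by positivity), mul_comm]

lemma setOf_lt_inv_norm_sub_subset_ball {E : Type*} [SeminormedAddCommGroup E] (η : E) {t : ℝ}
    (ht : 0 < t) : {z : E | t < ‖z - η‖⁻¹} ⊆ ball η t⁻¹ := by
  intro z hz
  rw [mem_ofPred_eq] at hz
  rw [mem_ball, dist_eq_norm]
  rcases (norm_nonneg (z - η)).eq_or_lt with h0 | h0
  · rw [← h0]; positivity
  · exact (lt_inv_comm₀ ht h0).1 hz

lemma lintegral_inv_ofReal_norm_sub_eq_lintegral_meas_lt {E : Type*} [NormedAddCommGroup E]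
    [MeasurableSpace E] [BorelSpace E] (μ : Measure E) [NullSingletonClass μ] (η : E) :
    ∫⁻ z, (ENNReal.ofReal ‖z - η‖)⁻¹ ∂μ = ∫⁻ t in Ioi 0, μ {z | t < ‖z - η‖⁻¹} := by
  -- The two integrands differ only at `z = η`, where `(ofReal 0)⁻¹ = ∞` but `ofReal 0⁻¹ = 0`.
  have h_ae : (fun z => (ENNReal.ofReal ‖z - η‖)⁻¹) =ᵐ[μ]
      fun z => ENNReal.ofReal ‖z - η‖⁻¹ := by
    filter_upwards [Measure.ae_ne μ η] with z hz
    exact (ENNReal.ofReal_inv_of_pos (norm_pos_iff.2 (sub_ne_zero.2 hz))).symm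
  rw [lintegral_congr_ae h_ae]
  exact lintegral_eq_lintegral_meas_lt μ (ae_of_all _ fun z => by positivity)
    (by fun_prop)

lemma lintegral_Ioi_ofReal_rpow_of_lt {p : ℝ} (hp : p < -1) {a : ℝ} (ha : 0 < a) :
    ∫⁻ t in Ioi a, ENNReal.ofReal (t ^ p) = ENNReal.ofReal (-a ^ (p + 1) / (p + 1)) := by
  rw [← ofReal_integral_eq_lintegral_ofReal (integrableOn_Ioi_rpow_of_lt hp ha),
    integral_Ioi_rpow_of_lt hp ha]
  filter_upwards [self_mem_ae_restrict measurableSet_Ioi] with t ht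
  exact Real.rpow_nonneg (ha.trans ht).le p

lemma lintegral_inv_norm_sub_le_of_volume_le {s : Set ℂ} {r : ℝ} (hr : 0 < r)
    (hs : volume s ≤ ENNReal.ofReal (Real.pi * r ^ 2)) (η : ℂ) :
    ∫⁻ z in s, (ENNReal.ofReal ‖z - η‖)⁻¹ ≤ ENNReal.ofReal (2 * Real.pi * r) := by
  rw [lintegral_inv_ofReal_norm_sub_eq_lintegral_meas_lt,
    ← Ioc_union_Ioi_eq_Ioi (inv_pos.2 hr).le,
    lintegral_union measurableSet_Ioi Ioc_disjoint_Ioi_same]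
  have h_small : ∫⁻ t in Ioc 0 r⁻¹, volume.restrict s {z | t < ‖z - η‖⁻¹}
      ≤ ENNReal.ofReal (Real.pi * r) :=
    calc ∫⁻ t in Ioc 0 r⁻¹, volume.restrict s {z | t < ‖z - η‖⁻¹}
        ≤ ∫⁻ _ in Ioc 0 r⁻¹, ENNReal.ofReal (Real.pi * r ^ 2) :=
          lintegral_mono fun t =>
            (measure_mono (subset_univ _)).trans (by rwa [Measure.restrict_apply_univ])
      _ = ENNReal.ofReal (Real.pi * r) := by
          rw [setLIntegral_const, Real.volume_Ioc, ← ENNReal.ofReal_mul (by positivity)]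
          congr 1
          field_simp
          ring
  have h_large : ∫⁻ t in Ioi r⁻¹, volume.restrict s {z | t < ‖z - η‖⁻¹}
      ≤ ENNReal.ofReal (Real.pi * r) :=
    calc ∫⁻ t in Ioi r⁻¹, volume.restrict s {z | t < ‖z - η‖⁻¹}
        ≤ ∫⁻ t in Ioi r⁻¹, ENNReal.ofReal Real.pi * ENNReal.ofReal (t ^ (-2 : ℝ)) := by
          refine setLIntegral_mono' measurableSet_Ioi fun t ht => ?_
          have ht0 : 0 < t := (inv_pos.2 hr).trans ht
          calc volume.restrict s {z | t < ‖z - η‖⁻¹} ≤ volume (ball η t⁻¹) :=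
                (Measure.restrict_apply_le _ _).trans
                  (measure_mono (setOf_lt_inv_norm_sub_subset_ball η ht0))
            _ = ENNReal.ofReal Real.pi * ENNReal.ofReal (t ^ (-2 : ℝ)) := by
                rw [Complex.volume_ball_eq_ofReal η (by positivity),
                  ENNReal.ofReal_mul Real.pi_pos.le, Real.rpow_neg ht0.le, inv_pow]
                norm_cast
      _ = ENNReal.ofReal (Real.pi * r) := by
          rw [lintegral_const_mul' _ _ ENNReal.ofReal_ne_top,
            lintegral_Ioi_ofReal_rpow_of_lt (by norm_num) (inv_pos.2 hr),
            ← ENNReal.ofReal_mul Real.pi_pos.le]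
          norm_num [Real.rpow_neg_one]
  calc _ ≤ ENNReal.ofReal (Real.pi * r) + ENNReal.ofReal (Real.pi * r) :=
        add_le_add h_small h_large
    _ = ENNReal.ofReal (2 * Real.pi * r) := by
        rw [← ENNReal.ofReal_add (by positivity) (by positivity)]; ring_nf

theorem stmt_2 (ζ η : ℂ) (r : ℝ) (hr : 0 < r) :
    (∫⁻ z in ball ζ r,
        ENNReal.ofReal ‖z - ζ‖ / ENNReal.ofReal ‖z - η‖ ∂volume)
      / ENNReal.ofReal (Real.pi * r ^ 2) ≤ 2 := by
  rw [ENNReal.div_le_iff (by positivity) ENNReal.ofReal_ne_top]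
  calc ∫⁻ z in ball ζ r, ENNReal.ofReal ‖z - ζ‖ / ENNReal.ofReal ‖z - η‖
      ≤ ∫⁻ z in ball ζ r, ENNReal.ofReal r * (ENNReal.ofReal ‖z - η‖)⁻¹ := by
        refine setLIntegral_mono' measurableSet_ball fun z hz => ?_
        rw [div_eq_mul_inv]
        gcongr
        exact (mem_ball_iff_norm.1 hz).le
    _ = ENNReal.ofReal r * ∫⁻ z in ball ζ r, (ENNReal.ofReal ‖z - η‖)⁻¹ :=
        lintegral_const_mul' _ _ ENNReal.ofReal_ne_top
    _ ≤ ENNReal.ofReal r * ENNReal.ofReal (2 * Real.pi * r) := by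
        gcongr
        exact lintegral_inv_norm_sub_le_of_volume_le hr
          (Complex.volume_ball_eq_ofReal ζ hr.le).le η
    _ = 2 * ENNReal.ofReal (Real.pi * r ^ 2) := by
        rw [← ENNReal.ofReal_mul hr.le, ← ENNReal.ofReal_ofNat,
          ← ENNReal.ofReal_mul zero_le_two]
        ring_nf
end

section
/- Let μ be a finite positive Borel measure on ℂ with Newton potential M(w) = ∫ 1/|u - w| dμ(u). For any ζ ∈ ℂ, lim_{r→0+} (1/(π r²)) ∫_{D(ζ,r)} |w - ζ| · M(w) dL(w) = μ({ζ}). -/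
open MeasureTheory Metric ENNReal Filter

/-- The Newton potential `M_μ(z) = ∫ 1/|w - z| dμ(w)` of a measure on `ℂ`. -/
noncomputable def newtonPot (μ : Measure ℂ) (z : ℂ) : ℝ≥0∞ :=
  ∫⁻ w, (ENNReal.ofReal (‖w - z‖))⁻¹ ∂μ

/-! By Tonelli the averaged quantity equals `∫ K_r dμ` with
`K_r(u) = (π r²)⁻¹ ∫_{D(ζ,r)} |w - ζ| / |u - w| dL(w)`. One has `K_r(ζ) = 1`, and
`K_r(u) ≤ 2r / |u - ζ| → 0` for `u ≠ ζ`; moreover `K_r ≤ 6` uniformly, since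
`∫_{D(u,R)} |u - w|⁻¹ dL(w) = 2πR`. Dominated convergence then gives `μ {ζ}`. -/

open Real Topology

lemma volume_ball_eq_ofReal_pi_mul_sq (a : ℂ) {r : ℝ} (hr : 0 ≤ r) :
    volume (ball a r) = ENNReal.ofReal (π * r ^ 2) := by
  rw [Complex.volume_ball, ← ENNReal.ofReal_pow hr, ← NNReal.coe_real_pi,
    ← ENNReal.ofReal_coe_nnreal, ← ENNReal.ofReal_mul (by positivity), mul_comm]

lemma lintegral_ball_zero_inv_norm (R : ℝ) :
    ∫⁻ w in ball (0 : ℂ) R, (ENNReal.ofReal ‖w‖)⁻¹ = ENNReal.ofReal (2 * π * R) := by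
  -- in polar coordinates the integrand `ρ⁻¹` is cancelled by the Jacobian `ρ`
  have hpolar : ∀ p ∈ polarCoord.target, ENNReal.ofReal p.1 •
      (ball (0 : ℂ) R).indicator (fun w => (ENNReal.ofReal ‖w‖)⁻¹) (Complex.polarCoord.symm p) =
        (Set.Iio R ×ˢ Set.univ).indicator 1 p := by
    rintro ⟨ρ, θ⟩ ⟨hρ : 0 < ρ, -⟩
    by_cases h : ρ < R <;>
      simp [Set.indicator, abs_of_pos hρ, h, ENNReal.mul_inv_cancel, hρ]
  have hS : MeasurableSet (Set.Iio R ×ˢ (Set.univ : Set ℝ)) :=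
    measurableSet_Iio.prod MeasurableSet.univ
  rw [← lintegral_indicator measurableSet_ball, ← Complex.lintegral_comp_polarCoord_symm,
    setLIntegral_congr_fun polarCoord.open_target.measurableSet hpolar,
    lintegral_indicator_one hS, Measure.restrict_apply hS, polarCoord_target,
    Set.prod_inter_prod, Set.univ_inter, Set.Iio_inter_Ioi, Measure.volume_eq_prod,
    Measure.prod_prod, Real.volume_Ioo, Real.volume_Ioo,
    ← ENNReal.ofReal_mul' (by linarith [pi_pos])]
  ring_nf

lemma lintegral_ball_inv_norm_sub (u : ℂ) (R : ℝ) :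
    ∫⁻ w in ball u R, (ENNReal.ofReal ‖u - w‖)⁻¹ = ENNReal.ofReal (2 * π * R) := by
  rw [← lintegral_ball_zero_inv_norm R, ← lintegral_indicator measurableSet_ball,
    ← lintegral_indicator measurableSet_ball, ← lintegral_sub_left_eq_self _ u]
  congr with w
  simp [Set.indicator, dist_eq_norm]

lemma lintegral_mul_newtonPot (μ : Measure ℂ) [SFinite μ] {ν : Measure ℂ} [SFinite ν]
    {g : ℂ → ℝ≥0∞} (hg : Measurable g) :
    ∫⁻ w, g w * newtonPot μ w ∂ν = ∫⁻ u, ∫⁻ w, g w * (ENNReal.ofReal ‖u - w‖)⁻¹ ∂ν ∂μ := by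
  have hinner : ∀ w, g w * newtonPot μ w = ∫⁻ u, g w * (ENNReal.ofReal ‖u - w‖)⁻¹ ∂μ :=
    fun w => (lintegral_const_mul _ (by fun_prop)).symm
  simp_rw [hinner]
  exact lintegral_lintegral_swap (by fun_prop)

noncomputable def diskKernel (ζ : ℂ) (r : ℝ) (u : ℂ) : ℝ≥0∞ :=
  (∫⁻ w in ball ζ r, ENNReal.ofReal ‖w - ζ‖ * (ENNReal.ofReal ‖u - w‖)⁻¹) /
    ENNReal.ofReal (π * r ^ 2)

section diskKernel

variable {ζ u : ℂ} {r : ℝ}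

lemma measurable_diskKernel (ζ : ℂ) (r : ℝ) : Measurable (diskKernel ζ r) :=
  (Measurable.lintegral_prod_right' (f := fun p : ℂ × ℂ =>
    ENNReal.ofReal ‖p.2 - ζ‖ * (ENNReal.ofReal ‖p.1 - p.2‖)⁻¹) (by fun_prop)).div_const _

lemma diskKernel_self (hr : 0 < r) : diskKernel ζ r ζ = 1 := by
  have hae : ∀ᵐ w ∂volume.restrict (ball ζ r),
      ENNReal.ofReal ‖w - ζ‖ * (ENNReal.ofReal ‖ζ - w‖)⁻¹ = 1 := by
    filter_upwards [ae_restrict_of_ae (compl_mem_ae_iff.2 (measure_singleton ζ))]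
      with w (hw : w ≠ ζ)
    rw [norm_sub_rev ζ w]
    exact ENNReal.mul_inv_cancel (by simpa [sub_eq_zero]) ofReal_ne_top
  rw [diskKernel, lintegral_congr_ae hae, setLIntegral_one,
    volume_ball_eq_ofReal_pi_mul_sq ζ hr.le, ENNReal.div_self (by positivity) ofReal_ne_top]

lemma diskKernel_le_of_forall_le (hr : 0 < r) {c : ℝ≥0∞}
    (h : ∀ w ∈ ball ζ r, ENNReal.ofReal ‖w - ζ‖ * (ENNReal.ofReal ‖u - w‖)⁻¹ ≤ c) :
    diskKernel ζ r u ≤ c := by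
  refine ENNReal.div_le_of_le_mul ?_
  calc _ ≤ ∫⁻ _ in ball ζ r, c := setLIntegral_mono' measurableSet_ball h
    _ = c * ENNReal.ofReal (π * r ^ 2) := by
      rw [setLIntegral_const, volume_ball_eq_ofReal_pi_mul_sq ζ hr.le]

lemma diskKernel_le_of_two_mul_le (hr : 0 < r) (hu : 2 * r ≤ ‖u - ζ‖) :
    diskKernel ζ r u ≤ ENNReal.ofReal (2 * r / ‖u - ζ‖) := by
  refine diskKernel_le_of_forall_le hr fun w hw => ?_
  rw [mem_ball, dist_eq_norm] at hw
  have hdist : ‖u - ζ‖ / 2 ≤ ‖u - w‖ := by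
    linarith [norm_sub_le_norm_sub_add_norm_sub u w ζ]
  rw [← div_eq_mul_inv, ← ENNReal.ofReal_div_of_pos (by linarith)]
  refine ENNReal.ofReal_le_ofReal ?_
  rw [div_le_div_iff₀ (by linarith) (by linarith)]
  nlinarith [norm_nonneg (w - ζ)]

lemma diskKernel_le_six (hr : 0 < r) : diskKernel ζ r u ≤ 6 := by
  rcases le_or_gt (2 * r) ‖u - ζ‖ with hfar | hnear
  · calc diskKernel ζ r u ≤ ENNReal.ofReal (2 * r / ‖u - ζ‖) :=
          diskKernel_le_of_two_mul_le hr hfar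
      _ ≤ ENNReal.ofReal 1 := ENNReal.ofReal_le_ofReal ((div_le_one (by linarith)).2 hfar)
      _ ≤ 6 := by norm_num
  -- near `ζ`, bound `‖w - ζ‖` by `r` and integrate `‖u - w‖⁻¹` over the larger disc `D(u, 3r)`
  have hball : ball ζ r ⊆ ball u (3 * r) := fun w hw => by
    rw [mem_ball, dist_eq_norm] at hw ⊢
    linarith [norm_sub_le_norm_sub_add_norm_sub w ζ u, norm_sub_rev ζ u]
  refine ENNReal.div_le_of_le_mul ?_
  calc ∫⁻ w in ball ζ r, ENNReal.ofReal ‖w - ζ‖ * (ENNReal.ofReal ‖u - w‖)⁻¹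
      ≤ ∫⁻ w in ball ζ r, ENNReal.ofReal r * (ENNReal.ofReal ‖u - w‖)⁻¹ := by
        refine setLIntegral_mono' measurableSet_ball fun w hw => ?_
        rw [mem_ball, dist_eq_norm] at hw
        gcongr
    _ ≤ ENNReal.ofReal r * ∫⁻ w in ball u (3 * r), (ENNReal.ofReal ‖u - w‖)⁻¹ := by
        rw [lintegral_const_mul' _ _ ofReal_ne_top]
        gcongr
    _ = 6 * ENNReal.ofReal (π * r ^ 2) := by
        rw [lintegral_ball_inv_norm_sub u (3 * r), ← ENNReal.ofReal_mul hr.le,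
          show (6 : ℝ≥0∞) = ENNReal.ofReal 6 by norm_num, ← ENNReal.ofReal_mul (by norm_num)]
        ring_nf

lemma tendsto_diskKernel (ζ u : ℂ) :
    Tendsto (fun r => diskKernel ζ r u) (𝓝[>] 0) (𝓝 (({ζ} : Set ℂ).indicator 1 u)) := by
  rcases eq_or_ne u ζ with rfl | hu
  · rw [Set.indicator_of_mem (Set.mem_singleton u), Pi.one_apply]
    exact tendsto_const_nhds.congr' <| eventually_nhdsWithin_of_forall fun r hr =>
      (diskKernel_self hr).symm
  rw [Set.indicator_of_notMem (Set.notMem_singleton_iff.2 hu)]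
  have hd : 0 < ‖u - ζ‖ := norm_pos_iff.2 (sub_ne_zero.2 hu)
  have hbound : ∀ᶠ r in 𝓝[>] 0, diskKernel ζ r u ≤ ENNReal.ofReal (2 * r / ‖u - ζ‖) := by
    filter_upwards [self_mem_nhdsWithin, nhdsWithin_le_nhds (eventually_lt_nhds (half_pos hd))]
      with r hr hrd
    exact diskKernel_le_of_two_mul_le hr (by linarith)
  have hlim : Tendsto (fun r : ℝ => ENNReal.ofReal (2 * r / ‖u - ζ‖)) (𝓝[>] 0) (𝓝 0) := by
    rw [← ENNReal.ofReal_zero]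
    refine ENNReal.tendsto_ofReal (tendsto_nhdsWithin_of_tendsto_nhds ?_)
    simpa using ((continuous_const.mul continuous_id).div_const ‖u - ζ‖).tendsto 0
  exact tendsto_of_tendsto_of_tendsto_of_le_of_le' tendsto_const_nhds hlim
    (Eventually.of_forall fun _ => zero_le) hbound

end diskKernel

theorem stmt_6 (μ : Measure ℂ) [IsFiniteMeasure μ] (ζ : ℂ) :
    Tendsto (fun r : ℝ =>
        (∫⁻ w in ball ζ r, ENNReal.ofReal (‖w - ζ‖) * newtonPot μ w ∂volume)
          / ENNReal.ofReal (Real.pi * r ^ 2))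
      (nhdsWithin 0 (Set.Ioi 0)) (nhds (μ {ζ})) := by
  have hkernel : ∀ r : ℝ, 0 < r →
      (∫⁻ w in ball ζ r, ENNReal.ofReal ‖w - ζ‖ * newtonPot μ w) / ENNReal.ofReal (π * r ^ 2) =
        ∫⁻ u, diskKernel ζ r u ∂μ := fun r hr => by
    simp_rw [lintegral_mul_newtonPot μ (g := fun w => ENNReal.ofReal ‖w - ζ‖) (by fun_prop),
      diskKernel, div_eq_mul_inv]
    exact (lintegral_mul_const' _ _ (inv_ne_top.2 (by positivity))).symm
  rw [← lintegral_indicator_one (measurableSet_singleton ζ)]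
  refine (tendsto_lintegral_filter_of_dominated_convergence (fun _ => 6)
    (Eventually.of_forall (measurable_diskKernel ζ)) ?_ (lintegral_const_lt_top (by simp)).ne
    (ae_of_all _ (tendsto_diskKernel ζ))).congr' ?_
  · exact eventually_nhdsWithin_of_forall fun r hr => ae_of_all _ fun _ => diskKernel_le_six hr
  · exact eventually_nhdsWithin_of_forall fun r hr => (hkernel r hr).symm
end

section
/- Let Ω ⊆ ℂ be a domain and ζ ∈ ∂Ω. If there exists f holomorphic on Ω, continuous on Ω ∪ {ζ}, with |f| < 1 on Ω and f(ζ) = 1 (a weak peak function at ζ), then for every sequence z_ν ∈ Ω with z_ν → ζ and every z₀ ∈ Ω, the Carathéodory distance c_Ω(z₀, z_ν) → ∞. -/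
/-!
A weak peak function `f` at `ζ` sends `z ν` to points `f (z ν) → 1` on the unit circle, so the
Poincaré distance `p(f z₀, f (z ν))` tends to infinity, and it is a lower bound for
`c_Ω(z₀, z ν)`. For that lower bound to mean anything the supremum defining `c_Ω` must be
finite (`sSup` of an unbounded set of reals is `0`): by the Schwarz–Pick lemma on small discs,
`p(f x, f y)` is bounded uniformly in `f` for `y` near `x`, and the triangle inequality for `p`
spreads this bound over the connected domain `Ω`.
-/

open Filter

/-- The Möbius distance `m(a,b) = |(a - b)/(1 - ā b)|` on the unit disk. -/
noncomputable def mobiusDist (a b : ℂ) : ℝ :=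
  ‖(a - b) / (1 - (starRingEnd ℂ) a * b)‖

/-- The Poincaré distance `p(a,b) = (1/2) log((1 + m(a,b))/(1 - m(a,b)))`. -/
noncomputable def poincareDist (a b : ℂ) : ℝ :=
  (1 / 2) * Real.log ((1 + mobiusDist a b) / (1 - mobiusDist a b))

/-- The Carathéodory pseudodistance of `Ω ⊆ ℂ`. -/
noncomputable def caraDist (Ω : Set ℂ) (x y : ℂ) : ℝ :=
  sSup {t : ℝ | ∃ f : ℂ → ℂ, DifferentiableOn ℂ f Ω ∧
    (∀ z ∈ Ω, ‖f z‖ < 1) ∧ t = poincareDist (f x) (f y)}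

/-- The Möbius–Carathéodory pseudodistance `c*` of `Ω ⊆ ℂ`. -/
noncomputable def caraStarDist (Ω : Set ℂ) (x y : ℂ) : ℝ :=
  sSup {t : ℝ | ∃ f : ℂ → ℂ, DifferentiableOn ℂ f Ω ∧
    (∀ z ∈ Ω, ‖f z‖ < 1) ∧ t = mobiusDist (f x) (f y)}

open Metric Set Topology ComplexConjugate

namespace Real

theorem artanh_add_artanh {u v : ℝ} (hu : u ∈ Ioo (-1) 1) (hv : v ∈ Ioo (-1) 1) :
    artanh u + artanh v = artanh ((u + v) / (1 + u * v)) := by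
  obtain ⟨hu₁, hu₂⟩ := hu
  obtain ⟨hv₁, hv₂⟩ := hv
  have hpos : 0 < 1 + u * v := by nlinarith
  have hmem : (u + v) / (1 + u * v) ∈ Icc (-1) 1 := by
    constructor
    · rw [le_div_iff₀ hpos]; nlinarith
    · rw [div_le_iff₀ hpos]; nlinarith
  rw [artanh_eq_half_log ⟨hu₁.le, hu₂.le⟩, artanh_eq_half_log ⟨hv₁.le, hv₂.le⟩,
    artanh_eq_half_log hmem, ← mul_add, ← log_mul (div_pos (by linarith) (by linarith)).ne'
      (div_pos (by linarith) (by linarith)).ne']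
  have : 1 + u * v - (u + v) ≠ 0 := by nlinarith
  congr 2
  field_simp
  ring

theorem tendsto_artanh_nhdsLT_one : Tendsto artanh (𝓝[<] 1) atTop := by
  have hsub : Tendsto (1 - ·) (𝓝[<] (1 : ℝ)) (𝓝[>] 0) :=
    tendsto_nhdsWithin_iff.2
      ⟨((continuous_sub_left 1).tendsto' 1 0 (sub_self 1)).mono_left nhdsWithin_le_nhds,
        eventually_nhdsWithin_of_forall fun _ hx => mem_Ioi.2 (sub_pos.2 hx)⟩
  have hadd : Tendsto (1 + ·) (𝓝[<] (1 : ℝ)) (𝓝 2) :=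
    ((continuous_const_add 1).tendsto' 1 2 one_add_one_eq_two).mono_left nhdsWithin_le_nhds
  have hquot : Tendsto (fun x : ℝ => (1 + x) / (1 - x)) (𝓝[<] 1) atTop :=
    hadd.pos_mul_atTop two_pos (tendsto_inv_nhdsGT_zero.comp hsub)
  exact tendsto_log_atTop.comp (tendsto_sqrt_atTop.comp hquot)

end Real

theorem sq_norm_one_sub_conj_mul_sub_sq_norm_sub (a b : ℂ) :
    ‖1 - conj a * b‖ ^ 2 - ‖a - b‖ ^ 2 = (1 - ‖a‖ ^ 2) * (1 - ‖b‖ ^ 2) := by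
  simp only [← Complex.normSq_eq_norm_sq, Complex.normSq_apply]
  simp only [Complex.sub_re, Complex.one_re, Complex.mul_re, Complex.conj_re, Complex.conj_im,
    neg_mul, sub_neg_eq_add, Complex.sub_im, Complex.one_im, Complex.mul_im, zero_sub, neg_add_rev,
    neg_neg]
  ring

theorem norm_one_sub_conj_mul_comm (a b : ℂ) : ‖1 - conj a * b‖ = ‖1 - conj b * a‖ := by
  rw [← Complex.norm_conj]
  simp [mul_comm]

theorem one_sub_conj_mul_ne_zero {a b : ℂ} (ha : ‖a‖ < 1) (hb : ‖b‖ ≤ 1) :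
    1 - conj a * b ≠ 0 := by
  refine sub_ne_zero.2 fun h => ?_
  have : ‖conj a * b‖ < 1 := by
    rw [norm_mul, Complex.norm_conj]
    exact mul_lt_one_of_nonneg_of_lt_one_left (norm_nonneg a) ha hb
  simp [← h] at this

theorem mobiusDist_eq_norm_div (a b : ℂ) :
    mobiusDist a b = ‖a - b‖ / ‖1 - conj a * b‖ :=
  norm_div _ _

theorem mobiusDist_nonneg (a b : ℂ) : 0 ≤ mobiusDist a b :=
  norm_nonneg _

theorem mobiusDist_comm (a b : ℂ) : mobiusDist a b = mobiusDist b a := by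
  rw [mobiusDist_eq_norm_div, mobiusDist_eq_norm_div, norm_sub_rev, norm_one_sub_conj_mul_comm]

theorem mobiusDist_lt_one {a b : ℂ} (ha : ‖a‖ < 1) (hb : ‖b‖ < 1) : mobiusDist a b < 1 := by
  have hD := norm_pos_iff.2 (one_sub_conj_mul_ne_zero ha hb.le)
  have hid := sq_norm_one_sub_conj_mul_sub_sq_norm_sub a b
  have hP : 0 < (1 - ‖a‖ ^ 2) * (1 - ‖b‖ ^ 2) := by
    apply mul_pos <;> nlinarith [norm_nonneg a, norm_nonneg b]
  rw [mobiusDist_eq_norm_div, div_lt_one hD]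
  nlinarith [norm_nonneg (a - b)]

theorem mobiusDist_eq_one_of_norm_eq_one {a b : ℂ} (ha : ‖a‖ < 1) (hb : ‖b‖ = 1) :
    mobiusDist a b = 1 := by
  have hD := norm_pos_iff.2 (one_sub_conj_mul_ne_zero ha hb.le)
  have hid := sq_norm_one_sub_conj_mul_sub_sq_norm_sub a b
  rw [hb] at hid
  rw [mobiusDist_eq_norm_div, div_eq_one_iff_eq hD.ne']
  nlinarith [norm_nonneg (a - b)]

theorem continuousAt_mobiusDist {a b : ℂ} (h : 1 - conj a * b ≠ 0) :
    ContinuousAt (mobiusDist a) b :=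
  ((continuousAt_const.sub continuousAt_id).div
    (continuousAt_const.sub (continuousAt_const.mul continuousAt_id)) h).norm

theorem mobiusDist_le_div_one_add_mul {a c : ℂ} (ha : ‖a‖ < 1) (hc : ‖c‖ < 1) :
    mobiusDist a c ≤ (‖a‖ + ‖c‖) / (1 + ‖a‖ * ‖c‖) := by
  have hD := norm_pos_iff.2 (one_sub_conj_mul_ne_zero ha hc.le)
  have hDle : ‖1 - conj a * c‖ ≤ 1 + ‖a‖ * ‖c‖ := by
    simpa using norm_sub_le (1 : ℂ) (conj a * c)
  have hid := sq_norm_one_sub_conj_mul_sub_sq_norm_sub a c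
  have hP : 0 ≤ (1 - ‖a‖ ^ 2) * (1 - ‖c‖ ^ 2) := by
    apply mul_nonneg <;> nlinarith [norm_nonneg a, norm_nonneg c]
  rw [mobiusDist_eq_norm_div, div_le_div_iff₀ hD (by positivity)]
  refine le_of_pow_le_pow_left₀ two_ne_zero (by positivity) ?_
  -- `(1 + xy)² - (x + y)² = (1 - x²)(1 - y²)`, the same factor as in `hid`
  nlinarith [mul_le_mul_of_nonneg_left (pow_le_pow_left₀ hD.le hDle 2) hP]

noncomputable def blaschkeFactor (b z : ℂ) : ℂ := (z - b) / (1 - conj b * z)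

theorem norm_blaschkeFactor (b z : ℂ) : ‖blaschkeFactor b z‖ = mobiusDist b z := by
  rw [blaschkeFactor, mobiusDist, norm_div, norm_div, norm_sub_rev]

theorem mobiusDist_blaschkeFactor {a b c : ℂ} (ha : ‖a‖ < 1) (hb : ‖b‖ < 1) (hc : ‖c‖ < 1) :
    mobiusDist (blaschkeFactor b a) (blaschkeFactor b c) = mobiusDist a c := by
  have hda := one_sub_conj_mul_ne_zero hb ha.le
  have hdc := one_sub_conj_mul_ne_zero hb hc.le
  have hda' : 1 - b * conj a ≠ 0 := by simpa using (map_ne_zero conj).2 hda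
  have hbb := norm_ne_zero_iff.2 (one_sub_conj_mul_ne_zero hb hb.le)
  have hsub : blaschkeFactor b a - blaschkeFactor b c =
      (a - c) * (1 - conj b * b) / ((1 - conj b * a) * (1 - conj b * c)) := by
    rw [blaschkeFactor, blaschkeFactor, div_sub_div _ _ hda hdc]
    ring
  have hconj : 1 - conj (blaschkeFactor b a) * blaschkeFactor b c =
      (1 - conj a * c) * (1 - conj b * b) / ((1 - b * conj a) * (1 - conj b * c)) := by
    simp only [blaschkeFactor, map_div₀, map_sub, map_mul, map_one, Complex.conj_conj]
    rw [div_mul_div_comm, one_sub_div (mul_ne_zero hda' hdc)]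
    ring
  rw [mobiusDist, hsub, hconj, mobiusDist_eq_norm_div]
  simp only [norm_div, norm_mul, mul_comm b, norm_one_sub_conj_mul_comm a b]
  rw [div_div_div_cancel_right₀ (by simp [hda, hdc]), mul_div_mul_right _ _ hbb]

theorem mobiusDist_triangle {a b c : ℂ} (ha : ‖a‖ < 1) (hb : ‖b‖ < 1) (hc : ‖c‖ < 1) :
    mobiusDist a c ≤
      (mobiusDist a b + mobiusDist b c) / (1 + mobiusDist a b * mobiusDist b c) := by
  have hba : ‖blaschkeFactor b a‖ < 1 := norm_blaschkeFactor b a ▸ mobiusDist_lt_one hb ha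
  have hbc : ‖blaschkeFactor b c‖ < 1 := norm_blaschkeFactor b c ▸ mobiusDist_lt_one hb hc
  have := mobiusDist_le_div_one_add_mul hba hbc
  rwa [mobiusDist_blaschkeFactor ha hb hc, norm_blaschkeFactor, norm_blaschkeFactor,
    ← mobiusDist_comm a b] at this

theorem poincareDist_eq_artanh {a b : ℂ} (ha : ‖a‖ < 1) (hb : ‖b‖ < 1) :
    poincareDist a b = Real.artanh (mobiusDist a b) := by
  rw [poincareDist, Real.artanh_eq_half_log]
  exact ⟨by linarith [mobiusDist_nonneg a b], (mobiusDist_lt_one ha hb).le⟩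

theorem poincareDist_comm (a b : ℂ) : poincareDist a b = poincareDist b a := by
  rw [poincareDist, poincareDist, mobiusDist_comm]

theorem poincareDist_triangle {a b c : ℂ} (ha : ‖a‖ < 1) (hb : ‖b‖ < 1) (hc : ‖c‖ < 1) :
    poincareDist a c ≤ poincareDist a b + poincareDist b c := by
  have hu₀ := mobiusDist_nonneg a b
  have hv₀ := mobiusDist_nonneg b c
  have hu₁ := mobiusDist_lt_one ha hb
  have hv₁ := mobiusDist_lt_one hb hc
  rw [poincareDist_eq_artanh ha hc, poincareDist_eq_artanh ha hb, poincareDist_eq_artanh hb hc,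
    Real.artanh_add_artanh ⟨by linarith, hu₁⟩ ⟨by linarith, hv₁⟩]
  refine Real.artanh_le_artanh (by linarith [mobiusDist_nonneg a c]) ?_
    (mobiusDist_triangle ha hb hc)
  rw [div_lt_one (by positivity)]
  nlinarith

theorem tendsto_poincareDist_atTop {ι : Type*} {l : Filter ι} {a w₀ : ℂ} {w : ι → ℂ}
    (ha : ‖a‖ < 1) (hw₀ : ‖w₀‖ = 1) (hw : ∀ i, ‖w i‖ < 1) (hlim : Tendsto w l (𝓝 w₀)) :
    Tendsto (fun i => poincareDist a (w i)) l atTop := by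
  have hm : Tendsto (fun i => mobiusDist a (w i)) l (𝓝[<] 1) := by
    refine tendsto_nhdsWithin_iff.2
      ⟨?_, Eventually.of_forall fun i => mobiusDist_lt_one ha (hw i)⟩
    rw [← mobiusDist_eq_one_of_norm_eq_one ha hw₀]
    exact (continuousAt_mobiusDist (one_sub_conj_mul_ne_zero ha hw₀.le)).tendsto.comp hlim
  exact (Real.tendsto_artanh_nhdsLT_one.comp hm).congr fun i =>
    (poincareDist_eq_artanh ha (hw i)).symm

theorem mobiusDist_le_dist_div_of_mapsTo_ball {f : ℂ → ℂ} {c w : ℂ} {R : ℝ}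
    (hf : DifferentiableOn ℂ f (ball c R)) (hmaps : MapsTo f (ball c R) (ball 0 1))
    (hw : w ∈ ball c R) :
    mobiusDist (f c) (f w) ≤ dist w c / R := by
  have hfc : ‖f c‖ < 1 := mem_ball_zero_iff.1 (hmaps (mem_ball_self (pos_of_mem_ball hw)))
  set g : ℂ → ℂ := fun z => blaschkeFactor (f c) (f z)
  have hg : DifferentiableOn ℂ g (ball c R) :=
    (hf.sub_const _).div ((differentiableOn_const _).sub ((differentiableOn_const _).mul hf))
      fun z hz => one_sub_conj_mul_ne_zero hfc (mem_ball_zero_iff.1 (hmaps hz)).le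
  have hgc : g c = 0 := by simp [g, blaschkeFactor]
  have hgmaps : MapsTo g (ball c R) (closedBall (g c) 1) := fun z hz => by
    rw [hgc, mem_closedBall_zero_iff, norm_blaschkeFactor]
    exact (mobiusDist_lt_one hfc (mem_ball_zero_iff.1 (hmaps hz))).le
  have := Complex.dist_le_div_mul_dist_of_mapsTo_ball hg hgmaps hw
  rwa [hgc, dist_zero_right, norm_blaschkeFactor, one_div_mul_eq_div] at this

section Caratheodory

variable {Ω : Set ℂ} {x y : ℂ}

theorem eventually_poincareDist_le_artanh_half (hΩ : IsOpen Ω) (hx : x ∈ Ω) :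
    ∀ᶠ y in 𝓝 x, ∀ f : ℂ → ℂ, DifferentiableOn ℂ f Ω → (∀ z ∈ Ω, ‖f z‖ < 1) →
      poincareDist (f x) (f y) ≤ Real.artanh (1 / 2) := by
  obtain ⟨R, hR, hsub⟩ := Metric.isOpen_iff.1 hΩ x hx
  filter_upwards [ball_mem_nhds x (half_pos hR)] with y hy f hf hb
  have hm : mobiusDist (f x) (f y) ≤ 1 / 2 := by
    refine (mobiusDist_le_dist_div_of_mapsTo_ball (hf.mono hsub)
      (fun z hz => mem_ball_zero_iff.2 (hb z (hsub hz)))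
      (ball_subset_ball (by linarith) hy)).trans ?_
    rw [div_le_iff₀ hR]
    linarith [mem_ball.1 hy]
  rw [poincareDist_eq_artanh (hb x hx) (hb y (hsub (ball_subset_ball (by linarith) hy)))]
  exact Real.artanh_le_artanh (by linarith [mobiusDist_nonneg (f x) (f y)]) (by norm_num) hm

theorem exists_forall_poincareDist_le (hΩ : IsOpen Ω) (hc : IsPreconnected Ω)
    (hx : x ∈ Ω) (hy : y ∈ Ω) :
    ∃ C, ∀ f : ℂ → ℂ, DifferentiableOn ℂ f Ω → (∀ z ∈ Ω, ‖f z‖ < 1) →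
      poincareDist (f x) (f y) ≤ C := by
  refine hc.induction₂ (fun x y => ∃ C, ∀ f : ℂ → ℂ, DifferentiableOn ℂ f Ω →
      (∀ z ∈ Ω, ‖f z‖ < 1) → poincareDist (f x) (f y) ≤ C)
    (fun x hx => ?_) (fun x y z hx hy hz => ?_) (fun x y _ _ => ?_) hx hy
  · exact nhdsWithin_le_nhds ((eventually_poincareDist_le_artanh_half hΩ hx).mono
      fun y hy => ⟨_, hy⟩)
  · rintro ⟨C₁, h₁⟩ ⟨C₂, h₂⟩
    exact ⟨C₁ + C₂, fun f hf hb => (poincareDist_triangle (hb x hx) (hb y hy) (hb z hz)).trans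
      (add_le_add (h₁ f hf hb) (h₂ f hf hb))⟩
  · rintro ⟨C, h⟩
    exact ⟨C, fun f hf hb => poincareDist_comm (f y) (f x) ▸ h f hf hb⟩

theorem poincareDist_le_caraDist (hΩ : IsOpen Ω) (hc : IsPreconnected Ω)
    (hx : x ∈ Ω) (hy : y ∈ Ω) {f : ℂ → ℂ} (hf : DifferentiableOn ℂ f Ω)
    (hb : ∀ z ∈ Ω, ‖f z‖ < 1) :
    poincareDist (f x) (f y) ≤ caraDist Ω x y := by
  obtain ⟨C, hC⟩ := exists_forall_poincareDist_le hΩ hc hx hy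
  exact le_csSup ⟨C, by rintro t ⟨g, hg, hgb, rfl⟩; exact hC g hg hgb⟩ ⟨f, hf, hb, rfl⟩

end Caratheodory

theorem stmt_11_general (Ω : Set ℂ) (hΩ : IsOpen Ω) (hc : IsConnected Ω)
    (ζ : ℂ)
    (hpeak : ∃ f : ℂ → ℂ, DifferentiableOn ℂ f Ω ∧ ContinuousOn f (Ω ∪ {ζ}) ∧
      (∀ z ∈ Ω, ‖f z‖ < 1) ∧ f ζ = 1) :
    ∀ z : ℕ → ℂ, (∀ ν, z ν ∈ Ω) → Tendsto z atTop (nhds ζ) →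
      ∀ z₀ ∈ Ω, Tendsto (fun ν => caraDist Ω z₀ (z ν)) atTop atTop := by
  obtain ⟨f, hf, hcont, hb, hfζ⟩ := hpeak
  intro z hzΩ hz z₀ hz₀
  have hfz : Tendsto (fun ν => f (z ν)) atTop (𝓝 1) :=
    hfζ ▸ (hcont ζ (Or.inr rfl)).tendsto.comp
      (tendsto_nhdsWithin_iff.2 ⟨hz, Eventually.of_forall fun ν => Or.inl (hzΩ ν)⟩)
  refine tendsto_atTop_mono
    (fun ν => poincareDist_le_caraDist hΩ hc.isPreconnected hz₀ (hzΩ ν) hf hb) ?_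
  exact tendsto_poincareDist_atTop (hb z₀ hz₀) norm_one (fun ν => hb _ (hzΩ ν)) hfz

theorem stmt_11 (Ω : Set ℂ) (hΩ : IsOpen Ω) (hc : IsConnected Ω)
    (ζ : ℂ) (hζ : ζ ∈ frontier Ω)
    (hpeak : ∃ f : ℂ → ℂ, DifferentiableOn ℂ f Ω ∧ ContinuousOn f (Ω ∪ {ζ}) ∧
      (∀ z ∈ Ω, ‖f z‖ < 1) ∧ f ζ = 1) :
    ∀ z : ℕ → ℂ, (∀ ν, z ν ∈ Ω) → Tendsto z atTop (nhds ζ) →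
      ∀ z₀ ∈ Ω, Tendsto (fun ν => caraDist Ω z₀ (z ν)) atTop atTop :=
  stmt_11_general Ω hΩ hc ζ hpeak
end

section
/- Let ζ ∈ ℂ, r_j → 0, and suppose K_j ⊆ D(ζ, r_j) are compact sets with holomorphic functions f_j : (ℂ∪{∞}) \ K_j → 𝔻, f_j(∞) = 0, and f_j'(∞)/r_j ≥ α > 0 for all large j. Define g_j(z) = (z - ζ) f_j(z) / f_j'(∞). Then for every z in the domain of g_j with |z - ζ| ≥ r_j, one has |g_j(z)| ≤ r_j / f_j'(∞), and consequently |g_j| ≤ 2/α on its domain for all large j, while g_j(∞) = 1. -/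
/-! Inverting at `ζ`, the function `w ↦ f (ζ + r / w)` extends holomorphically across `w = 0`
with value `0` (as `f` vanishes at `∞`), and maps the unit disk into the closed unit disk, since
`ζ + r / w` lies outside `D(ζ, r) ⊇ K`. The Schwarz lemma gives `|f (ζ + r / w)| ≤ |w|`, that is
`|(z - ζ) f z| ≤ r` for `|z - ζ| > r`; for `|z - ζ| ≤ r` this is immediate from `|f| < 1`.
Dividing by `f'(∞) ≥ α r` gives the bounds, and `(z - ζ) f z → f'(∞)` at `∞`. -/

open Filter Metric Function Bornology Topology Set

lemma tendsto_const_add_div_nhdsNE_zero {𝕜 : Type*} [NormedDivisionRing 𝕜] (a : 𝕜) {c : 𝕜}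
    (hc : c ≠ 0) : Tendsto (fun w : 𝕜 => a + c / w) (𝓝[≠] 0) (cobounded 𝕜) := by
  simpa only [div_eq_mul_inv, Function.comp_def] using (tendsto_const_add_cobounded a).comp
    ((tendsto_mul_left_cobounded hc).comp tendsto_inv₀_nhdsNE_zero)

section InversionAtCenter

variable {ζ : ℂ} {r : ℝ} {K : Set ℂ} {f : ℂ → ℂ}

lemma mapsTo_const_add_div_ball_diff_zero (hr : 0 < r) (hKr : K ⊆ closedBall ζ r) :
    MapsTo (fun w : ℂ => ζ + r / w) (ball 0 1 \ {0}) Kᶜ := by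
  rintro w ⟨hw1, hw0 : w ≠ 0⟩ hwK
  have hnorm : ‖ζ + r / w - ζ‖ = r / ‖w‖ := by
    rw [add_sub_cancel_left, norm_div, Complex.norm_real, Real.norm_of_nonneg hr.le]
  have hlt : r < r / ‖w‖ :=
    lt_div_iff₀ (norm_pos_iff.2 hw0) |>.2 (by simpa [mul_lt_iff_lt_one_right hr] using hw1)
  exact (hnorm ▸ mem_closedBall_iff_norm.1 (hKr hwK)).not_gt hlt

lemma differentiableOn_update_comp_const_add_div (hr : 0 < r) (hKr : K ⊆ closedBall ζ r)
    (hf : DifferentiableOn ℂ f Kᶜ) (hf0 : Tendsto f (cocompact ℂ) (𝓝 0)) :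
    DifferentiableOn ℂ (update (fun w => f (ζ + r / w)) 0 0) (ball 0 1) := by
  rw [← Complex.differentiableOn_compl_singleton_and_continuousAt_iff (ball_mem_nhds 0 one_pos)]
  refine ⟨?_, continuousAt_update_same.2 <| hf0.comp ?_⟩
  · refine DifferentiableOn.congr (f := fun w => f (ζ + r / w)) ?_ fun w hw => update_of_ne hw.2 ..
    refine hf.comp (fun w ⟨_, (hw0 : w ≠ 0)⟩ => ?_) (mapsTo_const_add_div_ball_diff_zero hr hKr)
    exact DifferentiableAt.differentiableWithinAt (by fun_prop (disch := exact hw0))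
  · exact cobounded_eq_cocompact (α := ℂ) ▸
      tendsto_const_add_div_nhdsNE_zero ζ (by exact_mod_cast hr.ne')

theorem norm_sub_mul_le_of_differentiableOn_compl (hr : 0 < r) (hKr : K ⊆ closedBall ζ r)
    (hf : DifferentiableOn ℂ f Kᶜ) (hf1 : ∀ z ∈ Kᶜ, ‖f z‖ ≤ 1)
    (hf0 : Tendsto f (cocompact ℂ) (𝓝 0)) {z : ℂ} (hz : z ∈ Kᶜ) :
    ‖(z - ζ) * f z‖ ≤ r := by
  rcases le_or_gt ‖z - ζ‖ r with hzr | hzr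
  · rw [norm_mul]
    exact (mul_le_of_le_one_right (norm_nonneg _) (hf1 z hz)).trans hzr
  set g : ℂ → ℂ := update (fun w => f (ζ + r / w)) 0 0
  have hg : DifferentiableOn ℂ g (ball 0 1) :=
    differentiableOn_update_comp_const_add_div hr hKr hf hf0
  have hmaps : MapsTo g (ball 0 1) (closedBall 0 1) := by
    intro w hw
    rcases eq_or_ne w 0 with rfl | hw0
    · simp [g]
    · simpa [g, update_of_ne hw0] using
        hf1 _ (mapsTo_const_add_div_ball_diff_zero hr hKr ⟨hw, hw0⟩)
  have hr' : (r : ℂ) ≠ 0 := by exact_mod_cast hr.ne'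
  have hzζ : 0 < ‖z - ζ‖ := hr.trans hzr
  set w : ℂ := r / (z - ζ)
  have hw0 : w ≠ 0 := div_ne_zero hr' (norm_pos_iff.1 hzζ)
  have hw : ‖w‖ = r / ‖z - ζ‖ := by
    rw [norm_div, Complex.norm_real, Real.norm_of_nonneg hr.le]
  have hgw : g w = f z := by
    simp only [g, update_of_ne hw0, w, div_div_cancel₀ hr', add_sub_cancel]
  have schwarz := Complex.norm_le_norm_of_mapsTo_ball hg hmaps (update_self ..)
    (hw ▸ (div_lt_one hzζ).2 hzr)
  rw [hgw, hw, le_div_iff₀ hzζ] at schwarz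
  rwa [norm_mul, mul_comm]

end InversionAtCenter

theorem stmt_14_general (ζ : ℂ) (r : ℕ → ℝ) (hrpos : ∀ j, 0 < r j)
    (K : ℕ → Set ℂ) (hKb : ∀ j, K j ⊆ Metric.ball ζ (r j))
    (f : ℕ → ℂ → ℂ) (hf : ∀ j, DifferentiableOn ℂ (f j) (K j)ᶜ)
    (hfD : ∀ j, ∀ z ∈ (K j)ᶜ, ‖f j z‖ < 1)
    (hf0 : ∀ j, Tendsto (f j) (cocompact ℂ) (nhds 0))
    (d : ℕ → ℝ) (hdpos : ∀ j, 0 < d j)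
    (hd : ∀ j, Tendsto (fun z => z * f j z) (cocompact ℂ) (nhds (d j : ℂ)))
    (α : ℝ) (hα : 0 < α) (J₀ : ℕ) (hαd : ∀ j, J₀ ≤ j → α ≤ d j / r j) :
    (∀ j, ∀ z ∈ (K j)ᶜ, r j ≤ ‖z - ζ‖ →
        ‖(z - ζ) * f j z / (d j : ℂ)‖ ≤ r j / d j) ∧
    (∃ J : ℕ, ∀ j, J ≤ j → ∀ z ∈ (K j)ᶜ,
        ‖(z - ζ) * f j z / (d j : ℂ)‖ ≤ 2 / α) ∧
    (∀ j, Tendsto (fun z => (z - ζ) * f j z / (d j : ℂ)) (cocompact ℂ) (nhds 1)) := by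
  have hbound : ∀ j, ∀ z ∈ (K j)ᶜ, ‖(z - ζ) * f j z / (d j : ℂ)‖ ≤ r j / d j := by
    intro j z hz
    rw [norm_div, Complex.norm_real, Real.norm_of_nonneg (hdpos j).le]
    refine div_le_div_of_nonneg_right ?_ (hdpos j).le
    exact norm_sub_mul_le_of_differentiableOn_compl (hrpos j)
      ((hKb j).trans ball_subset_closedBall) (hf j) (fun z hz => (hfD j z hz).le) (hf0 j) hz
  refine ⟨fun j z hz _ => hbound j z hz, ⟨J₀, fun j hj z hz => (hbound j z hz).trans ?_⟩,
    fun j => ?_⟩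
  · calc r j / d j ≤ 1 / α := by
          rw [div_le_div_iff₀ (hdpos j) hα, one_mul, ← le_div_iff₀' (hrpos j)]
          exact hαd j hj
      _ ≤ 2 / α := by gcongr; norm_num
  · have hdj : (d j : ℂ) ≠ 0 := by exact_mod_cast (hdpos j).ne'
    have := ((hd j).sub ((hf0 j).const_mul ζ)).div_const (d j : ℂ)
    simpa only [← sub_mul, mul_zero, sub_zero, div_self hdj] using this

theorem stmt_14 (ζ : ℂ) (r : ℕ → ℝ) (hrpos : ∀ j, 0 < r j)
    (hr0 : Tendsto r atTop (nhds 0))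
    (K : ℕ → Set ℂ) (hK : ∀ j, IsCompact (K j)) (hKb : ∀ j, K j ⊆ Metric.ball ζ (r j))
    (f : ℕ → ℂ → ℂ) (hf : ∀ j, DifferentiableOn ℂ (f j) (K j)ᶜ)
    (hfD : ∀ j, ∀ z ∈ (K j)ᶜ, ‖f j z‖ < 1)
    (hf0 : ∀ j, Tendsto (f j) (cocompact ℂ) (nhds 0))
    (d : ℕ → ℝ) (hdpos : ∀ j, 0 < d j)
    (hd : ∀ j, Tendsto (fun z => z * f j z) (cocompact ℂ) (nhds (d j : ℂ)))
    (α : ℝ) (hα : 0 < α) (J₀ : ℕ) (hαd : ∀ j, J₀ ≤ j → α ≤ d j / r j) :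
    (∀ j, ∀ z ∈ (K j)ᶜ, r j ≤ ‖z - ζ‖ →
        ‖(z - ζ) * f j z / (d j : ℂ)‖ ≤ r j / d j) ∧
    (∃ J : ℕ, ∀ j, J ≤ j → ∀ z ∈ (K j)ᶜ,
        ‖(z - ζ) * f j z / (d j : ℂ)‖ ≤ 2 / α) ∧
    (∀ j, Tendsto (fun z => (z - ζ) * f j z / (d j : ℂ)) (cocompact ℂ) (nhds 1)) :=
  stmt_14_general ζ r hrpos K hKb f hf hfD hf0 d hdpos hd α hα J₀ hαd
end
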